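/- (Top component of: an equivariant homotopy momentum section induces a weak homotopy momentum section.) Let (A, L, ρ) be a Lie–Rinehart algebra over ℝ with a connection ∇, let n ≥ 1, let ω be an alternating A-multilinear (n+1)-form on Der_ℝ(A), and let μ₀ : L^n → A be an alternating A-multilinear map which is equivariant and satisfies (ᴱdμ₀)(e₁,…,e_{n+1}) = −ω(ρ(e_{n+1}), ρ(e_n), …, ρ(e₁)) for all e₁,…,e_{n+1} ∈ L. Then for all e₁,…,e_{n+1} ∈ L with Σ_{i<j} (−1)^{i+j} [e_i,e_j]^∇ ∧ e₁ ∧ … ∧ ê_i ∧ … ∧ ê_j ∧ … ∧ e_{n+1} = 0 in the n-th exterior power of the A-module L (Lie kernel elements), the full contraction vanishes: ω(ρ(e_{n+1}), …, ρ(e₁)) = 0. -/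
import Mathlib


open scoped BigOperators

/-- The tuple obtained from `e : Fin (m+1) → L` by inserting `b` in front and
omitting the entries at positions `i` and `j` (intended for `i < j`). -/
def omit2cons {L : Type*} {m : ℕ} (b : L) (e : Fin (m + 1) → L) (i j : Fin (m + 1)) :
    Fin m → L := fun k =>
  if (k : ℕ) = 0 then b
  else e ⟨if (k : ℕ) - 1 < (i : ℕ) then (k : ℕ) - 1
          else if (k : ℕ) < (j : ℕ) then (k : ℕ) else (k : ℕ) + 1,
        by have := k.isLt; split_ifs <;> omega⟩

/-- The tuple obtained from `f : Fin m → L` by inserting `b` in front and omitting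
the entry at position `i`. -/
def consOmit1 {L : Type*} {m : ℕ} (b : L) (f : Fin m → L) (i : Fin m) : Fin m → L := fun k =>
  if (k : ℕ) = 0 then b
  else f ⟨if (k : ℕ) - 1 < (i : ℕ) then (k : ℕ) - 1 else (k : ℕ),
        by have := k.isLt; split_ifs <;> omega⟩

/-- The Lie algebroid (Lie–Rinehart) differential of an `m`-form `α`, as a raw function:
`(ᴱdα)(e₁,…,e_{m+1}) = Σᵢ (−1)^{i−1} ρ(eᵢ)(α(e₁,…,êᵢ,…,e_{m+1}))
  + Σ_{i<j} (−1)^{i+j} α(⁅eᵢ,e_j⁆, e₁,…,êᵢ,…,ê_j,…,e_{m+1})`. -/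
def eDiff {A : Type*} [CommRing A] [Algebra ℝ A]
    {L : Type*} [LieRing L] [LieAlgebra ℝ L] [Module A L]
    (ρ : L →ₗ[A] Derivation ℝ A A) {m : ℕ}
    (α : (Fin m → L) → A) (e : Fin (m + 1) → L) : A :=
  (∑ i : Fin (m + 1), (-1 : ℤ) ^ (i : ℕ) • ρ (e i) (α (e ∘ i.succAbove)))
    + ∑ i : Fin (m + 1), ∑ j : Fin (m + 1),
        if i < j then (-1 : ℤ) ^ ((i : ℕ) + (j : ℕ)) • α (omit2cons ⁅e i, e j⁆ e i j) else 0

/-- The induced connection on `A`-valued `m`-forms on `L`: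
`(∇_X α)(e₁,…,e_m) = X(α(e₁,…,e_m)) − Σᵢ α(e₁,…,∇_X eᵢ,…,e_m)`. -/
def connForm {A : Type*} [CommRing A] [Algebra ℝ A]
    {L : Type*} [LieRing L] [LieAlgebra ℝ L] [Module A L]
    (D : Derivation ℝ A A → L → L) {m : ℕ}
    (X : Derivation ℝ A A) (α : (Fin m → L) → A) (f : Fin m → L) : A :=
  X (α f) - ∑ i : Fin m, α (Function.update f i (D X (f i)))

/-- The covariantized bracket `[e₁,e₂]^∇ = ⁅e₁,e₂⁆ − ∇_{ρ(e₁)}e₂ + ∇_{ρ(e₂)}e₁`. -/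
def covBracket {A : Type*} [CommRing A] [Algebra ℝ A]
    {L : Type*} [LieRing L] [LieAlgebra ℝ L] [Module A L]
    (ρ : L →ₗ[A] Derivation ℝ A A) (D : Derivation ℝ A A → L → L) (e₁ e₂ : L) : L :=
  ⁅e₁, e₂⁆ - D (ρ e₁) e₂ + D (ρ e₂) e₁

section Aux
set_option linter.unusedSectionVars false

variable {A : Type*} [CommRing A] {L : Type*} [AddCommGroup L] [Module A L]

lemma succAbove_val' {m : ℕ} (i : Fin (m + 1)) (k : Fin m) :
    ((i.succAbove k : Fin (m + 1)) : ℕ) = if (k : ℕ) < (i : ℕ) then (k : ℕ) else (k : ℕ) + 1 := by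
  rcases lt_or_ge (Fin.castSucc k) i with h | h
  · rw [Fin.succAbove_of_castSucc_lt _ _ h, Fin.coe_castSucc,
      if_pos (by simpa [Fin.lt_iff_val_lt_val] using h)]
  · rw [Fin.succAbove_of_le_castSucc _ _ h, Fin.val_succ,
      if_neg (by simp [Fin.le_iff_val_le_val] at h; omega)]

lemma consOmit1_comp_cycleRange {m : ℕ} (b : L) (f : Fin (m + 1) → L) (k : Fin (m + 1)) :
    (consOmit1 b f k) ∘ (Fin.cycleRange k) = Function.update f k b := by
  funext j
  rcases lt_trichotomy j k with h | h | h
  · rw [Function.comp_apply, Fin.cycleRange_of_lt h, Function.update_of_ne (ne_of_lt h)]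
    have hv : ((j + 1 : Fin (m + 1)) : ℕ) = (j : ℕ) + 1 :=
      Fin.val_add_one_of_lt (lt_of_lt_of_le h (Fin.le_last k))
    have hjk : (j : ℕ) < (k : ℕ) := h
    simp only [consOmit1, hv]
    rw [if_neg (by omega)]
    congr 1
    apply Fin.ext
    simp only [Fin.val_mk]
    split_ifs <;> omega
  · subst h
    rw [Function.comp_apply, Fin.cycleRange_self, Function.update_self]
    simp [consOmit1]
  · rw [Function.comp_apply, Fin.cycleRange_of_gt h, Function.update_of_ne (ne_of_gt h)]
    have hjk : (k : ℕ) < (j : ℕ) := h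
    simp only [consOmit1]
    rw [if_neg (by omega)]
    congr 1
    apply Fin.ext
    simp only [Fin.val_mk]
    split_ifs <;> omega

lemma map_update_eq {m : ℕ} (μ : AlternatingMap A L A (Fin (m + 1)))
    (f : Fin (m + 1) → L) (k : Fin (m + 1)) (b : L) :
    μ (Function.update f k b) = (-1 : ℤ) ^ (k : ℕ) • μ (consOmit1 b f k) := by
  rw [← consOmit1_comp_cycleRange b f k, AlternatingMap.map_perm, Fin.sign_cycleRange]
  simp [Units.smul_def]

lemma consOmit1_eq_omit2cons_lt {m : ℕ} (b : L) (e : Fin (m + 2) → L) (i : Fin (m + 2))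
    (k : Fin (m + 1)) (h : (k : ℕ) < (i : ℕ)) :
    consOmit1 b (e ∘ i.succAbove) k = omit2cons b e k.castSucc i := by
  funext t
  simp only [consOmit1, omit2cons, Function.comp_apply]
  by_cases h0 : (t : ℕ) = 0
  · simp [h0]
  · rw [if_neg h0, if_neg h0]
    congr 1
    apply Fin.ext
    rw [succAbove_val']
    simp only [Fin.coe_castSucc, Fin.val_mk]
    have := t.isLt
    split_ifs <;> omega

lemma consOmit1_eq_omit2cons_ge {m : ℕ} (b : L) (e : Fin (m + 2) → L) (i : Fin (m + 2))
    (k : Fin (m + 1)) (h : (i : ℕ) ≤ (k : ℕ)) :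
    consOmit1 b (e ∘ i.succAbove) k = omit2cons b e i k.succ := by
  funext t
  simp only [consOmit1, omit2cons, Function.comp_apply]
  by_cases h0 : (t : ℕ) = 0
  · simp [h0]
  · rw [if_neg h0, if_neg h0]
    congr 1
    apply Fin.ext
    rw [succAbove_val']
    simp only [Fin.val_succ, Fin.val_mk]
    have := t.isLt
    split_ifs <;> omega

lemma omit2cons_eq_update {m : ℕ} (b c : L) (e : Fin (m + 2) → L) (i j : Fin (m + 2)) :
    omit2cons b e i j = Function.update (omit2cons c e i j) 0 b := by
  funext t
  by_cases h0 : t = 0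
  · subst h0; simp [omit2cons, Function.update_self]
  · rw [Function.update_of_ne h0]
    have ht : (t : ℕ) ≠ 0 := by
      intro h; exact h0 (Fin.ext h)
    simp [omit2cons, ht]

lemma reindex_aux {m : ℕ} (μ : AlternatingMap A L A (Fin (m + 1))) (e : Fin (m + 2) → L)
    (b : Fin (m + 2) → Fin (m + 2) → L) :
    (∑ i : Fin (m + 2), ∑ k : Fin (m + 1),
      (-1 : ℤ) ^ ((i : ℕ) + (k : ℕ)) • μ (consOmit1 (b i (i.succAbove k)) (e ∘ i.succAbove) k))
    = ∑ i : Fin (m + 2), ∑ j : Fin (m + 2),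
        if i < j then (-1 : ℤ) ^ ((i : ℕ) + (j : ℕ)) •
          (μ (omit2cons (b j i) e i j) - μ (omit2cons (b i j) e i j)) else 0 := by
  set t : Fin (m + 2) → Fin (m + 2) → A := fun i j =>
    (if j < i then (-1 : ℤ) ^ ((i : ℕ) + (j : ℕ)) • μ (omit2cons (b i j) e j i) else 0)
      + (if i < j then -((-1 : ℤ) ^ ((i : ℕ) + (j : ℕ)) • μ (omit2cons (b i j) e i j)) else 0)
    with ht
  have step1 : ∀ (i : Fin (m + 2)) (k : Fin (m + 1)),
      (-1 : ℤ) ^ ((i : ℕ) + (k : ℕ)) • μ (consOmit1 (b i (i.succAbove k)) (e ∘ i.succAbove) k)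
        = t i (i.succAbove k) := by
    intro i k
    rcases lt_or_ge (k : ℕ) (i : ℕ) with h | h
    · have hc : Fin.castSucc k < i := by simpa [Fin.lt_iff_val_lt_val] using h
      have hsa : i.succAbove k = k.castSucc := Fin.succAbove_of_castSucc_lt _ _ hc
      rw [hsa, consOmit1_eq_omit2cons_lt _ _ _ _ h, ht]
      dsimp only
      rw [if_pos hc, if_neg (by simp [Fin.lt_iff_val_lt_val]; omega), add_zero,
        Fin.coe_castSucc]
    · have hc : i ≤ Fin.castSucc k := by simpa [Fin.le_iff_val_le_val] using h
      have hsa : i.succAbove k = k.succ := Fin.succAbove_of_le_castSucc _ _ hc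
      have h1 : i < k.succ := by simp [Fin.lt_iff_val_lt_val]; omega
      rw [hsa, consOmit1_eq_omit2cons_ge _ _ _ _ h, ht]
      dsimp only
      rw [if_neg (by simp [Fin.lt_iff_val_lt_val]; omega), if_pos h1, zero_add, Fin.val_succ,
        ← neg_smul]
      congr 1
      ring
  have step2 : ∀ i : Fin (m + 2), (∑ k : Fin (m + 1), t i (i.succAbove k)) = ∑ j, t i j := by
    intro i
    rw [Fin.sum_univ_succAbove (fun j => t i j) i]
    simp [ht]
  calc (∑ i : Fin (m + 2), ∑ k : Fin (m + 1),
      (-1 : ℤ) ^ ((i : ℕ) + (k : ℕ)) • μ (consOmit1 (b i (i.succAbove k)) (e ∘ i.succAbove) k))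
      = ∑ i : Fin (m + 2), ∑ j : Fin (m + 2), t i j := by
        refine Finset.sum_congr rfl fun i _ => ?_
        rw [← step2 i]
        exact Finset.sum_congr rfl fun k _ => step1 i k
    _ = (∑ i : Fin (m + 2), ∑ j : Fin (m + 2),
          if j < i then (-1 : ℤ) ^ ((i : ℕ) + (j : ℕ)) • μ (omit2cons (b i j) e j i) else 0)
        + (∑ i : Fin (m + 2), ∑ j : Fin (m + 2),
          if i < j then -((-1 : ℤ) ^ ((i : ℕ) + (j : ℕ)) • μ (omit2cons (b i j) e i j)) else 0) := by
        rw [← Finset.sum_add_distrib]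
        exact Finset.sum_congr rfl fun i _ => Finset.sum_add_distrib
    _ = (∑ i : Fin (m + 2), ∑ j : Fin (m + 2),
          if i < j then (-1 : ℤ) ^ ((i : ℕ) + (j : ℕ)) • μ (omit2cons (b j i) e i j) else 0)
        + (∑ i : Fin (m + 2), ∑ j : Fin (m + 2),
          if i < j then -((-1 : ℤ) ^ ((i : ℕ) + (j : ℕ)) • μ (omit2cons (b i j) e i j)) else 0) := by
        congr 1
        rw [Finset.sum_comm]
        refine Finset.sum_congr rfl fun i _ => Finset.sum_congr rfl fun j _ => ?_
        rw [Nat.add_comm (j : ℕ) (i : ℕ)]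
    _ = _ := by
        rw [← Finset.sum_add_distrib]
        refine Finset.sum_congr rfl fun i _ => ?_
        rw [← Finset.sum_add_distrib]
        refine Finset.sum_congr rfl fun j _ => ?_
        split_ifs with h
        · rw [smul_sub, sub_eq_add_neg]
        · rw [add_zero]

end Aux

/-- (Top component: an equivariant homotopy momentum section induces a weak
homotopy momentum section.) Let `(A, L, ρ)` be a Lie–Rinehart algebra with connection `∇`,
`n ≥ 1`, `ω` an alternating `A`-multilinear `(n+1)`-form on `Der_ℝ(A)`, and `μ₀ : Lⁿ → A`
alternating, `A`-multilinear, equivariant, with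
`(ᴱdμ₀)(e₁,…,e_{n+1}) = −ω(ρ(e_{n+1}),…,ρ(e₁))`. Then on Lie kernel elements the full
contraction vanishes: `ω(ρ(e_{n+1}),…,ρ(e₁)) = 0`. -/
theorem contraction_eq_zero_of_equivariant_homotopy_momentum_section
    {A : Type*} [CommRing A] [Algebra ℝ A]
    {L : Type*} [LieRing L] [LieAlgebra ℝ L] [Module A L]
    (ρ : L →ₗ[A] Derivation ℝ A A)
    (hanchor : ∀ e₁ e₂ : L, ρ ⁅e₁, e₂⁆ = ⁅ρ e₁, ρ e₂⁆)
    (hleibniz : ∀ (a : A) (e₁ e₂ : L), ⁅e₁, a • e₂⁆ = a • ⁅e₁, e₂⁆ + ρ e₁ a • e₂)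
    (D : Derivation ℝ A A → L → L)
    (hDaddX : ∀ (X Y : Derivation ℝ A A) (e : L), D (X + Y) e = D X e + D Y e)
    (hDsmulX : ∀ (a : A) (X : Derivation ℝ A A) (e : L), D (a • X) e = a • D X e)
    (hDadd : ∀ (X : Derivation ℝ A A) (e₁ e₂ : L), D X (e₁ + e₂) = D X e₁ + D X e₂)
    (hDsmulR : ∀ (X : Derivation ℝ A A) (r : ℝ) (e : L), D X (r • e) = r • D X e)
    (hDleibniz : ∀ (X : Derivation ℝ A A) (a : A) (e : L), D X (a • e) = a • D X e + X a • e)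
    {n : ℕ} (hn : 1 ≤ n)
    (ω : AlternatingMap A (Derivation ℝ A A) A (Fin (n + 1)))
    (μ₀ : AlternatingMap A L A (Fin n))
    (hequiv : ∀ (e : L) (f : Fin n → L),
      connForm D (ρ e) ⇑μ₀ f
        = ∑ i : Fin n, (-1 : ℤ) ^ (i : ℕ) • μ₀ (consOmit1 (covBracket ρ D e (f i)) f i))
    (hms : ∀ e : Fin (n + 1) → L,
      eDiff ρ ⇑μ₀ e = - ω (fun i : Fin (n + 1) => ρ (e i.rev))) :
    ∀ e : Fin (n + 1) → L,
      (∑ i : Fin (n + 1), ∑ j : Fin (n + 1),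
          if i < j then
            (-1 : ℤ) ^ ((i : ℕ) + (j : ℕ)) •
              ExteriorAlgebra.ιMulti A n (omit2cons (covBracket ρ D (e i) (e j)) e i j)
          else 0) = 0 →
      ω (fun i : Fin (n + 1) => ρ (e i.rev)) = 0 := by
  obtain ⟨p, rfl⟩ : ∃ p, n = p + 1 := ⟨n - 1, by omega⟩
  intro e hker
  -- the linear maps in the first slot of `omit2cons`
  set φf : Fin (p + 2) → Fin (p + 2) → (L →ₗ[A] A) := fun i j =>
    (μ₀ : MultilinearMap A (fun _ : Fin (p + 1) => L) A).toLinearMap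
      (omit2cons (0 : L) e i j) 0 with hφf
  have hφ : ∀ (i j : Fin (p + 2)) (x : L), μ₀ (omit2cons x e i j) = φf i j x := by
    intro i j x
    rw [omit2cons_eq_update x (0 : L) e i j, hφf]
    rfl
  -- Step 1: applying the lift of μ₀ to the Lie-kernel hypothesis
  have hB : (∑ i : Fin (p + 2), ∑ j : Fin (p + 2),
      if i < j then (-1 : ℤ) ^ ((i : ℕ) + (j : ℕ)) •
        μ₀ (omit2cons (covBracket ρ D (e i) (e j)) e i j) else 0) = 0 := by
    have h0 := congrArg (ExteriorAlgebra.liftAlternating (R := A) (M := L) (N := A)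
        (Pi.single (p + 1) μ₀)) hker
    simpa only [map_sum, map_zero, apply_ite, map_zsmul,
      ExteriorAlgebra.liftAlternating_apply_ιMulti, Pi.single_eq_same] using h0
  -- Step 2: rewrite the first part of eDiff using equivariance
  have hS1 : (∑ i : Fin (p + 2), (-1 : ℤ) ^ (i : ℕ) • ρ (e i) (μ₀ (e ∘ i.succAbove)))
      = (∑ i : Fin (p + 2), ∑ k : Fin (p + 1), (-1 : ℤ) ^ ((i : ℕ) + (k : ℕ)) •
          μ₀ (consOmit1 (D (ρ (e i)) (e (i.succAbove k))) (e ∘ i.succAbove) k))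
        + (∑ i : Fin (p + 2), ∑ k : Fin (p + 1), (-1 : ℤ) ^ ((i : ℕ) + (k : ℕ)) •
          μ₀ (consOmit1 (covBracket ρ D (e i) (e (i.succAbove k))) (e ∘ i.succAbove) k)) := by
    rw [← Finset.sum_add_distrib]
    refine Finset.sum_congr rfl fun i _ => ?_
    have h := hequiv (e i) (e ∘ i.succAbove)
    rw [connForm, sub_eq_iff_eq_add] at h
    rw [h, smul_add, add_comm]
    congr 1
    · rw [Finset.smul_sum]
      refine Finset.sum_congr rfl fun k _ => ?_
      rw [Function.comp_apply, map_update_eq μ₀ (e ∘ i.succAbove) k, smul_smul, ← pow_add]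
    · rw [Finset.smul_sum]
      refine Finset.sum_congr rfl fun k _ => ?_
      rw [Function.comp_apply, smul_smul, ← pow_add]
  -- Step 3: the key identity  eDiff = - (covariant-bracket double sum)
  have key : eDiff ρ ⇑μ₀ e
      = - (∑ i : Fin (p + 2), ∑ j : Fin (p + 2),
          if i < j then (-1 : ℤ) ^ ((i : ℕ) + (j : ℕ)) •
            μ₀ (omit2cons (covBracket ρ D (e i) (e j)) e i j) else 0) := by
    rw [eq_neg_iff_add_eq_zero, eDiff, hS1,
      reindex_aux μ₀ e (fun i j => D (ρ (e i)) (e j)),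
      reindex_aux μ₀ e (fun i j => covBracket ρ D (e i) (e j))]
    rw [← Finset.sum_add_distrib, ← Finset.sum_add_distrib, ← Finset.sum_add_distrib]
    rw [← Finset.sum_const_zero (s := (Finset.univ : Finset (Fin (p + 2))))]
    refine Finset.sum_congr rfl fun i _ => ?_
    rw [← Finset.sum_add_distrib, ← Finset.sum_add_distrib, ← Finset.sum_add_distrib]
    rw [← Finset.sum_const_zero (s := (Finset.univ : Finset (Fin (p + 2))))]
    refine Finset.sum_congr rfl fun j _ => ?_
    split_ifs with h
    · simp only [hφ]
      rw [← map_sub, ← map_sub, ← smul_add, ← smul_add, ← smul_add,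
        ← map_add, ← map_add, ← map_add]
      convert smul_zero ((-1 : ℤ) ^ ((i : ℕ) + (j : ℕ)))
      rw [← map_zero (φf i j)]
      congr 1
      simp only [covBracket]
      rw [← lie_skew (e i) (e j)]
      abel
    · simp
  -- Conclusion
  have hfinal := hms e
  rw [key, hB, neg_zero] at hfinal
  exact neg_eq_zero.mp hfinal.symm
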